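/- Let α, λ, r, d₀ be positive reals with 0 < d₀ < r, and suppose α·(r − d₀)·d₀/(4λ) ≤ e⁻¹. Then there exists σ > 0 such that α·(r − d₀) = λ·(2d₀/σ²)·exp(−d₀²/(2σ²)); equivalently, for every d ∈ ℝ^d with ‖d‖ = d₀, the SPELL force F_rad(d) = α·max(r − ‖d‖, 0)·d/‖d‖ and the Gaussian MMD force F_G(d;σ) = λ·(2/σ²)·exp(−‖d‖²/(2σ²))·d have equal Euclidean norms. -/

import Mathlib

/-!
With `t = d₀² / (2σ²)` the matching condition reads `t · exp(-t) = α(r - d₀)d₀ / (4λ)`.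
The function `t ↦ t · exp(-t)` increases from `0` to its maximum `e⁻¹` on `[0, 1]`, so the
intermediate value theorem supplies `t`, and `σ = d₀ / √(2t)`. On the sphere `‖d‖ = d₀` both
forces are radial, with magnitudes the two sides of the matching condition.
-/

/-- The SPELL radial repulsive force `F_rad(d) = α·max(r − ‖d‖, 0)·d/‖d‖`. -/
noncomputable def spellForce {n : ℕ} (α r : ℝ) (d : EuclideanSpace ℝ (Fin n)) :
    EuclideanSpace ℝ (Fin n) :=
  (α * max (r - ‖d‖) 0 / ‖d‖) • d

/-- The Gaussian MMD force `F_G(d;σ) = λ·(2/σ²)·exp(−‖d‖²/(2σ²))·d`. -/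
noncomputable def gaussForce {n : ℕ} (lam σ : ℝ) (d : EuclideanSpace ℝ (Fin n)) :
    EuclideanSpace ℝ (Fin n) :=
  (lam * (2 / σ ^ 2) * Real.exp (-‖d‖ ^ 2 / (2 * σ ^ 2))) • d

open Real

theorem exists_pos_mul_exp_neg_eq {c : ℝ} (hc : 0 < c) (hce : c ≤ exp (-1)) :
    ∃ t, 0 < t ∧ t * exp (-t) = c := by
  have hmem : c ∈ Set.Icc ((0 : ℝ) * exp (-0)) (1 * exp (-1)) := by
    simpa using ⟨hc.le, hce⟩
  obtain ⟨t, ht, htc⟩ := intermediate_value_Icc zero_le_one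
    (by fun_prop : ContinuousOn (fun t : ℝ => t * exp (-t)) (Set.Icc 0 1)) hmem
  refine ⟨t, ht.1.lt_of_ne ?_, htc⟩
  rintro rfl
  simp [hc.ne] at htc

theorem norm_spellForce {n : ℕ} {α : ℝ} (hα : 0 ≤ α) (r : ℝ) {d : EuclideanSpace ℝ (Fin n)}
    (hd : d ≠ 0) : ‖spellForce α r d‖ = α * max (r - ‖d‖) 0 := by
  have hnd : 0 < ‖d‖ := norm_pos_iff.mpr hd
  rw [spellForce, norm_smul, norm_of_nonneg (by positivity), div_mul_cancel₀ _ hnd.ne']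

theorem norm_gaussForce {n : ℕ} {lam : ℝ} (hlam : 0 ≤ lam) (σ : ℝ)
    (d : EuclideanSpace ℝ (Fin n)) :
    ‖gaussForce lam σ d‖ = lam * (2 * ‖d‖ / σ ^ 2) * exp (-‖d‖ ^ 2 / (2 * σ ^ 2)) := by
  rw [gaussForce, norm_smul, norm_of_nonneg (by positivity)]
  ring

theorem gaussProfile_at_bandwidth (lam : ℝ) {d₀ t : ℝ} (hd₀ : d₀ ≠ 0) (ht : 0 < t) :
    lam * (2 * d₀ / (d₀ / √(2 * t)) ^ 2) * exp (-d₀ ^ 2 / (2 * (d₀ / √(2 * t)) ^ 2))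
      = 4 * lam / d₀ * (t * exp (-t)) := by
  have hσsq : (d₀ / √(2 * t)) ^ 2 = d₀ ^ 2 / (2 * t) := by
    rw [div_pow, sq_sqrt (by positivity)]
  have hexp : -d₀ ^ 2 / (2 * (d₀ ^ 2 / (2 * t))) = -t := by
    field_simp
  rw [hσsq, hexp]
  field_simp
  ring

/-- Radius–bandwidth matching (existence): if `α(r − d₀)d₀/(4λ) ≤ e⁻¹`, then there is a
bandwidth `σ > 0` with `α(r − d₀) = λ·(2d₀/σ²)·exp(−d₀²/(2σ²))`; equivalently, for every
`d ∈ ℝ^n` with `‖d‖ = d₀`, the SPELL force and the Gaussian MMD force have equal norms. -/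
theorem stmt_5 (n : ℕ) (α lam r d₀ : ℝ) (hα : 0 < α) (hlam : 0 < lam)
    (hd₀ : 0 < d₀) (hd₀r : d₀ < r)
    (hc : α * (r - d₀) * d₀ / (4 * lam) ≤ Real.exp (-1)) :
    ∃ σ : ℝ, 0 < σ ∧
      α * (r - d₀) = lam * (2 * d₀ / σ ^ 2) * Real.exp (-d₀ ^ 2 / (2 * σ ^ 2)) ∧
      ∀ d : EuclideanSpace ℝ (Fin n), ‖d‖ = d₀ →
        ‖spellForce α r d‖ = ‖gaussForce lam σ d‖ := by
  have hrd : 0 < r - d₀ := sub_pos.mpr hd₀r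
  obtain ⟨t, ht, htc⟩ := exists_pos_mul_exp_neg_eq (by positivity) hc
  have hmatch : α * (r - d₀) = lam * (2 * d₀ / (d₀ / √(2 * t)) ^ 2)
      * exp (-d₀ ^ 2 / (2 * (d₀ / √(2 * t)) ^ 2)) := by
    rw [gaussProfile_at_bandwidth lam hd₀.ne' ht, htc]
    field_simp
  refine ⟨d₀ / √(2 * t), by positivity, hmatch, fun d hd => ?_⟩
  have hd0 : d ≠ 0 := norm_pos_iff.mp (hd ▸ hd₀)
  rw [norm_spellForce hα.le r hd0, norm_gaussForce hlam.le, hd, max_eq_left hrd.le, hmatch]
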